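/- Let E be an étale F-algebra of degree n and K/F a quadratic field extension. The determinant of the hermitian space V_{E,1} (i.e., the class in F×/N_{K/F}(K×) of det(⟨eᵢ,eⱼ⟩₁) for any K-basis (eᵢ)) equals the class of det_F(E) = det(Tr_{E/F}(eᵢeⱼ)) (the determinant of the trace form of E/F) in F×/N_{K/F}(K×). -/

import Mathlib

open scoped TensorProduct

/-! Let `b` be the `K`-basis `1 ⊗ fᵢ` of `K ⊗[F] E` and `P` the matrix expressing `e` in `b`.
The form `⟨x, y⟩₁` is linear in `x` and `conj`-semilinear in `y`, so its Gram matrix on `e` is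
`Pᵀ G conj(P)`, with `G` its Gram matrix on `b`, and its determinant is
`det P · det G · conj (det P)`, a norm times `det G`. The conjugation fixes every `1 ⊗ fᵢ`, and the
`K`-trace of `1 ⊗ z` is the `F`-trace of `z`, so `G` is the trace form of `E/F` on `f`. -/

open Matrix

/-- The involution `σ = conj ⊗ id` on `K_E = K ⊗[F] E`. -/
noncomputable def tensorConj {F K E : Type} [Field F] [Field K] [Algebra F K]
    [CommRing E] [Algebra F E] (conj : K →ₐ[F] K) :
    (K ⊗[F] E) →ₐ[F] (K ⊗[F] E) :=
  Algebra.TensorProduct.map conj (AlgHom.id F E)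

/-- The hermitian form `⟨x,y⟩_μ = Tr_{K_E/K}(μ · x · σ(y))` on `K_E`. -/
noncomputable def hermFormOf {F K E : Type} [Field F] [Field K] [Algebra F K]
    [CommRing E] [Algebra F E] (conj : K →ₐ[F] K) (μ x y : K ⊗[F] E) : K :=
  Algebra.trace K (K ⊗[F] E) (μ * x * (tensorConj conj y))

namespace LinearMap

variable {R M₁ M₂ ι₁ ι₂ κ₁ κ₂ : Type*} [CommSemiring R]
  [AddCommMonoid M₁] [Module R M₁] [AddCommMonoid M₂] [Module R M₂]
  [Fintype ι₁] [DecidableEq ι₁] [Fintype ι₂] [DecidableEq ι₂]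
  [Fintype κ₁] [DecidableEq κ₁] [Fintype κ₂] [DecidableEq κ₂]
  {σ₁ σ₂ : R →+* R}

theorem toMatrix₂_basis_change (B : M₁ →ₛₗ[σ₁] M₂ →ₛₗ[σ₂] R)
    (b₁ : Module.Basis ι₁ R M₁) (b₂ : Module.Basis ι₂ R M₂)
    (c₁ : Module.Basis κ₁ R M₁) (c₂ : Module.Basis κ₂ R M₂) :
    toMatrix₂ c₁ c₂ B =
      ((b₁.toMatrix c₁).map σ₁)ᵀ * toMatrix₂ b₁ b₂ B * (b₂.toMatrix c₂).map σ₂ := by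
  ext i j
  rw [toMatrix₂_apply, ← b₁.sum_toMatrix_smul_self c₁ i, ← b₂.sum_toMatrix_smul_self c₂ j]
  simp only [map_sum, map_smulₛₗ, LinearMap.sum_apply, LinearMap.smul_apply, smul_eq_mul,
    Matrix.mul_apply, Matrix.transpose_apply, Matrix.map_apply, toMatrix₂_apply,
    Finset.sum_mul, Finset.mul_sum]
  exact Finset.sum_congr rfl fun _ _ => Finset.sum_congr rfl fun _ _ => by ring

theorem det_toMatrix₂_basis_change {R M ι : Type*} [CommRing R] [AddCommGroup M]
    [Module R M] [Fintype ι] [DecidableEq ι] {σ₁ σ₂ : R →+* R}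
    (B : M →ₛₗ[σ₁] M →ₛₗ[σ₂] R) (b c : Module.Basis ι R M) :
    (toMatrix₂ c c B).det = σ₁ (b.det c) * (toMatrix₂ b b B).det * σ₂ (b.det c) := by
  rw [toMatrix₂_basis_change B b b c c, Matrix.det_mul, Matrix.det_mul, Matrix.det_transpose,
    Module.Basis.det_apply, RingHom.map_det, RingHom.map_det, RingHom.mapMatrix_apply,
    RingHom.mapMatrix_apply]

end LinearMap

theorem Algebra.trace_one_tmul {R A B : Type*} [CommRing R] [CommRing A] [Algebra R A]
    [CommRing B] [Algebra R B] [Module.Free R B] [Module.Finite R B] (z : B) :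
    Algebra.trace A (A ⊗[R] B) (1 ⊗ₜ z) = algebraMap R A (Algebra.trace R B z) := by
  rw [Algebra.trace_apply, ← Algebra.baseChange_lmul, LinearMap.trace_baseChange,
    Algebra.trace_apply]

section Hermitian

variable {F K E : Type} [Field F] [Field K] [Algebra F K] [CommRing E] [Algebra F E]

theorem tensorConj_smul (conj : K →ₐ[F] K) (c : K) (x : K ⊗[F] E) :
    tensorConj conj (c • x) = conj c • tensorConj conj x := by
  rw [Algebra.smul_def, map_mul, Algebra.smul_def]
  simp [tensorConj, Algebra.TensorProduct.algebraMap_apply]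

theorem tensorConj_one_tmul (conj : K →ₐ[F] K) (x : E) :
    tensorConj conj (1 ⊗ₜ x) = 1 ⊗ₜ x := by
  simp [tensorConj]

noncomputable def hermForm (conj : K →ₐ[F] K) :
    K ⊗[F] E →ₗ[K] K ⊗[F] E →ₛₗ[(conj : K →+* K)] K :=
  LinearMap.mk₂'ₛₗ (RingHom.id K) (conj : K →+* K) (hermFormOf conj 1)
    (fun x x' y => by simp only [hermFormOf, one_mul, add_mul, map_add])
    (fun c x y => by simp only [hermFormOf, one_mul, smul_mul_assoc, map_smul, smul_eq_mul,
      RingHom.id_apply])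
    (fun x y y' => by simp only [hermFormOf, one_mul, map_add, mul_add])
    (fun c x y => by simp only [hermFormOf, one_mul, tensorConj_smul, mul_smul_comm, map_smul,
      smul_eq_mul, AlgHom.coe_toRingHom])

theorem hermForm_apply (conj : K →ₐ[F] K) (x y : K ⊗[F] E) :
    hermForm conj x y = hermFormOf conj 1 x y := rfl

theorem hermFormOf_one_tmul [Module.Finite F E] (conj : K →ₐ[F] K) (x y : E) :
    hermFormOf conj 1 (1 ⊗ₜ x) (1 ⊗ₜ y) = algebraMap F K (Algebra.trace F E (x * y)) := by
  rw [hermFormOf, tensorConj_one_tmul, one_mul, Algebra.TensorProduct.tmul_mul_tmul, one_mul,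
    Algebra.trace_one_tmul]

theorem toMatrix₂_tensorProductBasis_hermForm [Module.Finite F E] {ι : Type*} [Fintype ι] [DecidableEq ι]
    (conj : K →ₐ[F] K) (f : Module.Basis ι F E) :
    LinearMap.toMatrix₂ (Algebra.TensorProduct.basis K f) (Algebra.TensorProduct.basis K f)
        (hermForm conj) =
      (Matrix.of fun i j => Algebra.trace F E (f i * f j)).map (algebraMap F K) := by
  ext i j
  simp [hermForm_apply, Algebra.TensorProduct.basis_apply, hermFormOf_one_tmul]

end Hermitian

theorem stmt6_general (F K E : Type) [Field F] [Field K] [Algebra F K]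
    [CommRing E] [Algebra F E] (n : ℕ)
    (conj : K →ₐ[F] K)
    [Module.Finite F E]
    (e : Module.Basis (Fin n) K (K ⊗[F] E)) (f : Module.Basis (Fin n) F E) :
    ∃ y : Kˣ,
      (Matrix.of fun i j => hermFormOf conj 1 (e i) (e j)).det
        = algebraMap F K (Matrix.of fun i j => Algebra.trace F E (f i * f j)).det
          * ((y : K) * conj (y : K)) := by
  set b := Algebra.TensorProduct.basis K f
  have hGram : (Matrix.of fun i j => hermFormOf conj 1 (e i) (e j)) =
      LinearMap.toMatrix₂ e e (hermForm conj) := by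
    ext i j
    simp [hermForm_apply]
  refine ⟨(b.isUnit_det e).unit, ?_⟩
  rw [hGram, (hermForm conj).det_toMatrix₂_basis_change b e, toMatrix₂_tensorProductBasis_hermForm,
    RingHom.map_det (algebraMap F K), RingHom.mapMatrix_apply, IsUnit.unit_spec, RingHom.id_apply,
    AlgHom.coe_toRingHom]
  ring

/-- For `K/F` a quadratic field extension and `E/F` étale of degree
`n`, the Gram determinant of the hermitian space `V_{E,1}` with respect to any
`K`-basis agrees, modulo norms `N_{K/F}(K×)`, with the determinant of the trace
form of `E/F` computed with respect to any `F`-basis of `E`. -/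
theorem stmt6 (F K E : Type) [Field F] [Field K] [Algebra F K]
    [CommRing E] [Algebra F E] (n : ℕ)
    (hchar : (2 : F) ≠ 0)
    (hK2 : Module.finrank F K = 2)
    (conj : K →ₐ[F] K)
    (hconj : ∀ x, conj (conj x) = x)
    (hfix : ∀ x : K, conj x = x ↔ ∃ a : F, algebraMap F K a = x)
    [Module.Finite F E] (hEn : Module.finrank F E = n)
    (hEet : ∀ x : E, x ≠ 0 → ∃ y : E, Algebra.trace F E (x * y) ≠ 0)
    (e : Module.Basis (Fin n) K (K ⊗[F] E)) (f : Module.Basis (Fin n) F E) :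
    ∃ y : Kˣ,
      (Matrix.of fun i j => hermFormOf conj 1 (e i) (e j)).det
        = algebraMap F K (Matrix.of fun i j => Algebra.trace F E (f i * f j)).det
          * ((y : K) * conj (y : K)) :=
  stmt6_general F K E n conj e f
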